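/- Fix a positive integer l, a constant c̄ > 0, and let g : ℝ → ℝ satisfy g(T) > T for all large T. Assume: (i) ∫_T^{g(T)} |ζ(1/2+it)|² dt / ∫_T^{g(T)} |S₁(t)|^{2l} dt = (1/c̄)·ln T + O(1) as T → ∞; (ii) (t_ν) is a Gram sequence satisfying the Titchmarsh-sum asymptotic. Then as T → ∞: (∫_T^{g(T)} |S₁(t)|^{2l} dt)⁵ · (∫_T^{g(T)} |ζ(1/2+it)|² dt)^{−5} · Σ_{ν : T ≤ t_ν ≤ 2T} |ζ(1/2 + i t_ν)|²·|ζ(1/2 + i t_{ν+1})|² = (3·c̄⁵/(4π⁵))·T·(1 + O(1/ln T)). -/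

import Mathlib

open Filter Topology MeasureTheory

/-- |ζ(σ+it)|² -/
noncomputable def zsq (σ : ℝ) (t : ℝ) : ℝ :=
  ‖riemannZeta (↑σ + ↑t * Complex.I)‖ ^ 2

/-- S₁(t) = (1/π)·∫₀^t arg ζ(1/2 + iu) du -/
noncomputable def S1 (t : ℝ) : ℝ :=
  (1 / Real.pi) * ∫ u in (0:ℝ)..t, Complex.arg (riemannZeta (1/2 + ↑u * Complex.I))

/-- Riemann–Siegel theta function θ(t) = Im log Γ(1/4 + it/2) − (t/2)·ln π. -/
noncomputable def RStheta (t : ℝ) : ℝ :=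
  (Complex.log (Complex.Gamma (1/4 + (↑t/2) * Complex.I))).im - (t/2) * Real.log Real.pi

/-- A Gram sequence: strictly increasing positive reals tending to ∞ with θ(t_ν) = π·ν. -/
def IsGramSeq (tν : ℕ → ℝ) : Prop :=
  StrictMono tν ∧ (∀ ν : ℕ, 1 ≤ ν → 0 < tν ν) ∧ Filter.Tendsto tν Filter.atTop Filter.atTop ∧
    ∀ ν : ℕ, 1 ≤ ν → RStheta (tν ν) = Real.pi * ν

/-- Titchmarsh sum Σ_{T ≤ t_ν ≤ 2T} |ζ(1/2+it_ν)|²·|ζ(1/2+it_{ν+1})|². -/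
noncomputable def TitchSum (tν : ℕ → ℝ) (T : ℝ) : ℝ :=
  ∑' ν : ℕ, if T ≤ tν ν ∧ tν ν ≤ 2 * T then zsq (1/2) (tν ν) * zsq (1/2) (tν (ν+1)) else 0

/-- The Titchmarsh-sum asymptotic (Moser 1991):
Σ_{T ≤ t_ν ≤ 2T} |ζ(1/2+it_ν)|²|ζ(1/2+it_{ν+1})|² = (3/(4π⁵))·T·ln⁵T·(1+O(1/ln T)). -/
def TitchAsymp (tν : ℕ → ℝ) : Prop :=
  ∃ C : ℝ, ∀ᶠ T in Filter.atTop,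
    |TitchSum tν T / (3 / (4 * Real.pi ^ 5) * T * Real.log T ^ 5) - 1| ≤ C / Real.log T


/-! With `A T = (∫ |ζ|² / ∫ |S₁|^{2l}) / (ln T / c̄)` and `B T` the Titchmarsh sum divided by its main
term `(3 / (4π⁵)) T ln⁵ T`, the two hypotheses say that `A - 1` and `B - 1` are `O(1 / ln T)`, and the
quantity to be estimated is exactly `B / A⁵`. Relative errors `O(ε)` with `ε → 0` survive powers and
quotients, which gives the claim. -/

open Asymptotics

section RelativeError

variable {α 𝕜 : Type*} [NormedField 𝕜] {l : Filter α} {f g : α → 𝕜} {ε : α → ℝ}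

theorem Asymptotics.IsBigO.tendsto_of_sub_one (h : (fun x => f x - 1) =O[l] ε)
    (hε : Tendsto ε l (𝓝 0)) : Tendsto f l (𝓝 1) := by
  simpa using (h.trans_tendsto hε).add_const 1

theorem Asymptotics.IsBigO.pow_sub_one (h : (fun x => f x - 1) =O[l] ε)
    (hε : Tendsto ε l (𝓝 0)) (n : ℕ) : (fun x => f x ^ n - 1) =O[l] ε := by
  have hsum : Tendsto (fun x => ∑ i ∈ Finset.range n, f x ^ i) l (𝓝 (n : 𝕜)) := by
    simpa using tendsto_finsetSum (Finset.range n)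
      fun i _ => (h.tendsto_of_sub_one hε).pow i
  simpa [geom_sum_mul] using (hsum.isBigO_one ℝ).mul h

theorem Asymptotics.IsBigO.div_sub_one (hf : (fun x => f x - 1) =O[l] ε)
    (hg : (fun x => g x - 1) =O[l] ε) (hε : Tendsto ε l (𝓝 0)) :
    (fun x => f x / g x - 1) =O[l] ε := by
  have hg_inv : Tendsto (fun x => (g x)⁻¹) l (𝓝 1) := by
    simpa using (hg.tendsto_of_sub_one hε).inv₀ one_ne_zero
  have hg_ne : ∀ᶠ x in l, g x ≠ 0 :=
    (hg.tendsto_of_sub_one hε).eventually_ne one_ne_zero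
  refine ((hf.sub hg).mul (hg_inv.isBigO_one ℝ)).congr' ?_ (.of_forall fun _ => mul_one _)
  filter_upwards [hg_ne] with x hx
  field_simp
  ring

theorem Asymptotics.IsBigO.div_sub_one_of_sub (h : (fun x => f x - g x) =O[l] (1 : α → 𝕜))
    (hg : ∀ᶠ x in l, g x ≠ 0) : (fun x => f x / g x - 1) =O[l] fun x => (g x)⁻¹ := by
  refine (h.mul (isBigO_refl (fun x => (g x)⁻¹) l)).congr' ?_ (.of_forall fun _ => one_mul _)
  filter_upwards [hg] with x hx
  field_simp

end RelativeError

theorem isBigO_inv_log_iff {f : ℝ → ℝ} :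
    (f =O[atTop] fun T => (Real.log T)⁻¹) ↔ ∃ C : ℝ, ∀ᶠ T in atTop, |f T| ≤ C / Real.log T := by
  have hlog : ∀ᶠ T in atTop, 0 < Real.log T := Real.tendsto_log_atTop.eventually_gt_atTop 0
  rw [isBigO_iff]
  refine exists_congr fun C => eventually_congr ?_
  filter_upwards [hlog] with T hT
  rw [Real.norm_eq_abs, norm_inv, Real.norm_of_nonneg hT.le, div_eq_mul_inv]

theorem crossbreed_S1_formula_general (l : ℕ) (cbar : ℝ) (hcbar : 0 < cbar)
    (g : ℝ → ℝ)
    (hquot : ∃ C : ℝ, ∀ᶠ T in atTop,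
      |(∫ t in T..(g T), zsq (1/2) t) / (∫ t in T..(g T), |S1 t| ^ (2 * l)) -
        (1 / cbar) * Real.log T| ≤ C)
    (tν : ℕ → ℝ) (htitch : TitchAsymp tν) :
    ∃ C : ℝ, ∀ᶠ T in atTop,
      |(∫ t in T..(g T), |S1 t| ^ (2 * l)) ^ 5 * ((∫ t in T..(g T), zsq (1/2) t) ^ 5)⁻¹ *
          TitchSum tν T /
        (3 * cbar ^ 5 / (4 * Real.pi ^ 5) * T) - 1| ≤ C / Real.log T := by
  obtain ⟨C, hC⟩ := hquot
  set Z : ℝ → ℝ := fun T => ∫ t in T..(g T), zsq (1/2) t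
  set I : ℝ → ℝ := fun T => ∫ t in T..(g T), |S1 t| ^ (2 * l)
  have hlog : ∀ᶠ T in atTop, Real.log T ≠ 0 :=
    (Real.tendsto_log_atTop.eventually_gt_atTop 0).mono fun _ h => h.ne'
  have hε : Tendsto (fun T => (Real.log T)⁻¹) atTop (𝓝 0) :=
    Real.tendsto_log_atTop.inv_tendsto_atTop
  have hbounded : (fun T => Z T / I T - (1 / cbar) * Real.log T) =O[atTop] (1 : ℝ → ℝ) :=
    .of_bound C (hC.mono fun T hT => by rwa [Pi.one_apply, norm_one, mul_one, Real.norm_eq_abs])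
  have hZI : (fun T => Z T / I T / ((1 / cbar) * Real.log T) - 1) =O[atTop]
      fun T => (Real.log T)⁻¹ := by
    refine (hbounded.div_sub_one_of_sub (hlog.mono fun T hT => by positivity)).trans
      (.of_bound cbar (.of_forall fun T => ?_))
    simp [abs_of_pos hcbar, mul_comm]
  have hmain := (isBigO_inv_log_iff.mpr htitch).div_sub_one (hZI.pow_sub_one hε 5) hε
  refine isBigO_inv_log_iff.mp (hmain.congr' ?_ .rfl)
  filter_upwards [hlog] with T hT
  field_simp
  ring

theorem crossbreed_S1_formula (l : ℕ) (hl : 0 < l) (cbar : ℝ) (hcbar : 0 < cbar)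
    (g : ℝ → ℝ) (hg : ∀ᶠ T in atTop, T < g T)
    (hquot : ∃ C : ℝ, ∀ᶠ T in atTop,
      |(∫ t in T..(g T), zsq (1/2) t) / (∫ t in T..(g T), |S1 t| ^ (2 * l)) -
        (1 / cbar) * Real.log T| ≤ C)
    (tν : ℕ → ℝ) (hgram : IsGramSeq tν) (htitch : TitchAsymp tν) :
    ∃ C : ℝ, ∀ᶠ T in atTop,
      |(∫ t in T..(g T), |S1 t| ^ (2 * l)) ^ 5 * ((∫ t in T..(g T), zsq (1/2) t) ^ 5)⁻¹ *
          TitchSum tν T /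
        (3 * cbar ^ 5 / (4 * Real.pi ^ 5) * T) - 1| ≤ C / Real.log T :=
  crossbreed_S1_formula_general l cbar hcbar g hquot tν htitch
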